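/- arXiv:0912.1503 — 2 statements merged into one kernel-verified Lean document; each statement's English description precedes it below -/
import Mathlib

section
/- Any set S of fewer than (q^{n−k+1} − 1)/(q − 1) one-dimensional subspaces of F_q^n fails to be a blocking set for k-dimensional subspaces: there exists a k-dimensional subspace of F_q^n containing no member of S. -/
/-!
Greedy extension. Suppose `W` has dimension `j < k` and contains no point of `S`. Each point
`B ∈ S` projects to a point of `V ⧸ W`, and `|S|` points of an `F`-space cover at most
`1 + |S| (q - 1)` vectors, where `q = |F|`. Since `|S| (q - 1) + 1 < q ^ (n - k + 1) ≤ |V ⧸ W|`,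
some `v` projects outside all of them, and then `W ⊔ span {v}` still contains no point of `S`,
because such a point would project onto the line spanned by the image of `v`.
-/

open Module

/-- Minimum size of a q-covering design C_q[n,k,r] over the field F. -/
noncomputable def covNum (F : Type) [Field F] [Fintype F] (n k r : ℕ) : ℕ :=
  sInf {m | ∃ S : Finset (Submodule F (Fin n → F)), S.card = m ∧
    (∀ W ∈ S, finrank F W = k) ∧
    ∀ R : Submodule F (Fin n → F), finrank F R = r → ∃ W ∈ S, R ≤ W}

/-- Minimum size of a q-Turán design T_q[n,k,r] over the field F. -/
noncomputable def turNum (F : Type) [Field F] [Fintype F] (n k r : ℕ) : ℕ :=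
  sInf {m | ∃ S : Finset (Submodule F (Fin n → F)), S.card = m ∧
    (∀ W ∈ S, finrank F W = r) ∧
    ∀ K : Submodule F (Fin n → F), finrank F K = k → ∃ W ∈ S, W ≤ K}

/-- Gaussian binomial coefficient [m choose r]_q, as the number of r-dimensional
subspaces of an m-dimensional space over F (with |F| = q). -/
noncomputable def gaussBinom (F : Type) [Field F] [Fintype F] (m r : ℕ) : ℕ :=
  Nat.card {W : Submodule F (Fin m → F) // finrank F W = r}

open Submodule Finset

theorem mul_sub_one_add_one_lt_pow_of_le {q m s : ℕ} (hq : 2 ≤ q) (hm : m ≠ 0)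
    (hs : s ≤ (q ^ m - 1) / (q - 1) - 1) : s * (q - 1) + 1 < q ^ m := by
  have hqm : q ≤ q ^ m := Nat.le_self_pow hm q
  have hG : (q ^ m - 1) / (q - 1) * (q - 1) + 1 = q ^ m := by
    rw [Nat.div_mul_cancel (Nat.sub_one_dvd_pow_sub_one q m)]; omega
  have hG1 : 1 ≤ (q ^ m - 1) / (q - 1) := Nat.div_pos (by omega) (by omega)
  calc s * (q - 1) + 1 < (s + 1) * (q - 1) + 1 := by rw [add_one_mul]; omega
    _ ≤ (q ^ m - 1) / (q - 1) * (q - 1) + 1 := by gcongr; omega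
    _ = q ^ m := hG

section

variable {F V : Type*} [Field F] [AddCommGroup V] [Module F V]

theorem exists_ne_zero_forall_notMem_of_card_lt [Finite F] [Finite V] (S : Finset (Submodule F V))
    (hS : ∀ B ∈ S, finrank F B ≤ 1) (hcard : #S * (Nat.card F - 1) + 1 < Nat.card V) :
    ∃ v : V, v ≠ 0 ∧ ∀ B ∈ S, v ∉ B := by
  have hline : ∀ B ∈ S, ((B : Set V) \ {0}).ncard ≤ Nat.card F - 1 := by
    intro B hB
    rw [Set.ncard_sdiff_singleton_of_mem B.zero_mem, ← Nat.card_coe_set_eq, SetLike.coe_sort_coe,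
      natCard_eq_pow_finrank (K := F)]
    have := hS B hB
    interval_cases finrank F B <;> simp
  have hcover : (insert 0 (⋃ B ∈ S, (B : Set V) \ {0})).ncard < Nat.card V := calc
    _ ≤ (⋃ B ∈ S, (B : Set V) \ {0}).ncard + 1 := Set.ncard_insert_le _ _
    _ ≤ ∑ B ∈ S, ((B : Set V) \ {0}).ncard + 1 := by gcongr; exact set_ncard_biUnion_le _ _
    _ ≤ #S * (Nat.card F - 1) + 1 := by gcongr; simpa using sum_le_card_nsmul _ _ _ hline
    _ < Nat.card V := hcard
  obtain ⟨v, hv⟩ : ∃ v, v ∉ insert 0 (⋃ B ∈ S, (B : Set V) \ {0}) := by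
    by_contra! h
    simp [Set.eq_univ_of_forall h] at hcover
  simp only [Set.mem_insert_iff, Set.mem_iUnion, Set.mem_sdiff, SetLike.mem_coe,
    Set.mem_singleton_iff, not_or, not_exists, not_and, not_not] at hv
  exact ⟨v, hv.1, fun B hB hvB => hv.1 (hv.2 B hB hvB)⟩

theorem exists_finrank_succ_forall_not_le [Finite F] [FiniteDimensional F V]
    (S : Finset (Submodule F V)) (hS : ∀ B ∈ S, finrank F B = 1)
    (W : Submodule F V) (hW : ∀ B ∈ S, ¬ B ≤ W)
    (hcard : #S * (Nat.card F - 1) + 1 < Nat.card (V ⧸ W)) :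
    ∃ W' : Submodule F V, finrank F W' = finrank F W + 1 ∧ ∀ B ∈ S, ¬ B ≤ W' := by
  classical
  have : Finite (V ⧸ W) := Module.finite_of_finite F
  obtain ⟨u, hu0, huS⟩ := exists_ne_zero_forall_notMem_of_card_lt (S.image (map W.mkQ))
    (by simpa using fun B hB => (finrank_map_le _ _).trans (hS B hB).le)
    (lt_of_le_of_lt (by gcongr; exact card_image_le) hcard)
  obtain ⟨v, rfl⟩ := W.mkQ_surjective u
  have hvW : v ∉ W := by simpa using hu0
  refine ⟨W ⊔ span F {v}, finrank_sup_span_singleton hvW, fun B hB hBle => ?_⟩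
  have hBmap : B.map W.mkQ ≤ span F {W.mkQ v} := by
    simpa [Submodule.map_sup, mkQ_map_self, map_span] using map_mono (f := W.mkQ) hBle
  have hBne : B.map W.mkQ ≠ ⊥ := by
    rw [Ne, ← LinearMap.le_ker_iff_map, ker_mkQ]
    exact hW B hB
  have hBeq := ((nonzero_span_atom _ hu0).le_iff.mp hBmap).resolve_left hBne
  exact huS _ (mem_image_of_mem _ hB) (hBeq ▸ mem_span_singleton_self _)

theorem exists_finrank_eq_forall_not_le [Finite F] [FiniteDimensional F V]
    (S : Finset (Submodule F V)) (hS : ∀ B ∈ S, finrank F B = 1) {k : ℕ} (hk : k ≤ finrank F V)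
    (hcard : #S * (Nat.card F - 1) + 1 < Nat.card F ^ (finrank F V - k + 1)) :
    ∃ W : Submodule F V, finrank F W = k ∧ ∀ B ∈ S, ¬ B ≤ W := by
  induction k with
  | zero =>
    refine ⟨⊥, finrank_bot F V, fun B hB hB0 => ?_⟩
    have := hS B hB
    rw [le_bot_iff.mp hB0, finrank_bot] at this
    exact zero_ne_one this
  | succ k ih =>
    have hq : 0 < Nat.card F := Nat.card_pos
    obtain ⟨W, rfl, hW⟩ := ih (by omega) (hcard.trans_le (Nat.pow_le_pow_right hq (by omega)))
    refine exists_finrank_succ_forall_not_le S hS W hW ?_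
    rw [natCard_eq_pow_finrank (K := F) (V := V ⧸ W)]
    convert hcard using 2
    have := W.finrank_quotient_add_finrank
    omega

end

theorem small_blocking_set_fails_general (F : Type) [Field F] [Fintype F] (n k : ℕ)
    (hkn : k ≤ n)
    (S : Finset (Submodule F (Fin n → F)))
    (hdim : ∀ B ∈ S, finrank F B = 1)
    (hcard : S.card ≤ ((Fintype.card F) ^ (n - k + 1) - 1) / (Fintype.card F - 1) - 1) :
    ∃ W : Submodule F (Fin n → F), finrank F W = k ∧ ∀ B ∈ S, ¬ B ≤ W := by
  have hbound := mul_sub_one_add_one_lt_pow_of_le Fintype.one_lt_card (Nat.succ_ne_zero _) hcard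
  rw [← Nat.card_eq_fintype_card] at hbound
  exact exists_finrank_eq_forall_not_le S hdim (by simpa using hkn) (by simpa using hbound)

theorem small_blocking_set_fails (F : Type) [Field F] [Fintype F] (n k : ℕ)
    (hk1 : 1 ≤ k) (hkn : k ≤ n)
    (S : Finset (Submodule F (Fin n → F)))
    (hdim : ∀ B ∈ S, finrank F B = 1)
    (hcard : S.card ≤ ((Fintype.card F) ^ (n - k + 1) - 1) / (Fintype.card F - 1) - 1) :
    ∃ W : Submodule F (Fin n → F), finrank F W = k ∧ ∀ B ∈ S, ¬ B ≤ W :=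
  small_blocking_set_fails_general F n k hkn S hdim hcard
end

section
/- C_q(n, k, r) ≤ q^{n−k}·C_q(n−1, k−1, r−1) + C_q(n−1, k, r): there is a recursive construction of a q-covering design C_q[n,k,r] from a q-covering design C_q[n−1,k−1,r−1] and a q-covering design C_q[n−1,k,r]. -/
open Module

/-!
Write `F^(p+1) = F × F^p`, with the new coordinate first, and let `f` be the first coordinate
functional. An `(r+1)`-space `R ≤ ker f` is the image of an `(r+1)`-space of `F^p`, so it is covered
by the image of a block of the `(k+1, r+1)`-design. Otherwise `R = (ker f ⊓ R) ⊔ F u` with `f u = 1`;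
the `r`-space `ker f ⊓ R` comes from `F^p`, where it is covered by a block `P` of the `(k, r)`-design.
If `u = (1, β)` and `y` is the chosen representative of `β + P`, then `u - (1, y) ∈ {0} × P`, so the
`(k+1)`-space spanned by `{0} × P` and `(1, y)` contains `R`. Each `P` has `q^(p-k)` cosets.
-/

open Submodule LinearMap

section CoveringDesign

variable {F V : Type*} [Field F] [AddCommGroup V] [Module F V]

def IsCoveringDesign (S : Finset (Submodule F V)) (k r : ℕ) : Prop :=
  (∀ W ∈ S, finrank F W = k) ∧ ∀ R : Submodule F V, finrank F R = r → ∃ W ∈ S, R ≤ W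

theorem Submodule.exists_le_finrank_eq [FiniteDimensional F V] (N : Submodule F V) {k : ℕ}
    (hNk : finrank F N ≤ k) (hkV : k ≤ finrank F V) :
    ∃ W : Submodule F V, N ≤ W ∧ finrank F W = k := by
  induction k, hNk using Nat.le_induction with
  | base => exact ⟨N, le_rfl, rfl⟩
  | succ k _ ih =>
    obtain ⟨W, hNW, hW⟩ := ih (by omega)
    obtain ⟨m, -, hm⟩ := SetLike.exists_of_lt (W.lt_top_of_finrank_lt_finrank (by omega))
    exact ⟨W ⊔ F ∙ m, hNW.trans le_sup_left, by rw [finrank_sup_span_singleton hm, hW]⟩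

theorem exists_isCoveringDesign [Finite F] [FiniteDimensional F V] {k r : ℕ} (hrk : r ≤ k)
    (hkV : k ≤ finrank F V) : ∃ S : Finset (Submodule F V), IsCoveringDesign S k r := by
  have : Finite V := Module.finite_of_finite F
  refine ⟨(Set.toFinite {W : Submodule F V | finrank F W = k}).toFinset,
    fun W hW => by simpa using hW, fun R hR => ?_⟩
  obtain ⟨W, hRW, hW⟩ := R.exists_le_finrank_eq (hR ▸ hrk) hkV
  exact ⟨W, by simpa using hW, hRW⟩

end CoveringDesign

section CovNum

variable {F : Type} [Field F] [Fintype F] {n k r : ℕ}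

theorem covNum_le_card {S : Finset (Submodule F (Fin n → F))} (hS : IsCoveringDesign S k r) :
    covNum F n k r ≤ S.card :=
  Nat.sInf_le ⟨S, rfl, hS⟩

theorem exists_isCoveringDesign_card_eq_covNum (hrk : r ≤ k) (hkn : k ≤ n) :
    ∃ S : Finset (Submodule F (Fin n → F)), IsCoveringDesign S k r ∧ S.card = covNum F n k r := by
  obtain ⟨S, hS⟩ := exists_isCoveringDesign (F := F) (V := Fin n → F) hrk (by simpa using hkn)
  obtain ⟨S, hS, hS'⟩ := Nat.sInf_mem (s := {m | ∃ S : Finset (Submodule F (Fin n → F)),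
    S.card = m ∧ IsCoveringDesign S k r}) ⟨S.card, S, rfl, hS⟩
  exact ⟨S, hS', hS⟩

end CovNum

section Recursion

-- `ι` and `v` abstract the paper's `x ↦ (x, 0)` and `(0, 1)` in `F^(n-1) × F`.
variable {F U V : Type*} [Field F] [AddCommGroup U] [Module F U] [AddCommGroup V] [Module F V]
  {f : V →ₗ[F] F} {ι : U →ₗ[F] V} {v : V}

theorem finrank_comap_of_injective (hι : Function.Injective ι) (R : Submodule F V) :
    finrank F (R.comap ι) = finrank F ↥(range ι ⊓ R) := by
  rw [(equivMapOfInjective ι hι _).finrank_eq, map_comap_eq]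

theorem ker_inf_sup_span_singleton {R : Submodule F V} {u : V} (hu : u ∈ R) (hfu : f u = 1) :
    ker f ⊓ R ⊔ F ∙ u = R := by
  refine le_antisymm (sup_le inf_le_right ((span_singleton_le_iff_mem _ _).mpr hu)) fun x hx => ?_
  have hx' : x - f x • u ∈ ker f ⊓ R := ⟨by simp [hfu], sub_mem hx (smul_mem _ _ hu)⟩
  simpa using
    add_mem (mem_sup_left hx') (mem_sup_right (smul_mem _ (f x) (mem_span_singleton_self u)))

theorem finrank_map_sup_span_singleton [FiniteDimensional F V] (hι : Function.Injective ι)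
    (hιf : range ι ≤ ker f) (hv : f v = 1) (P : Submodule F U) (y : U) :
    finrank F ↥(P.map ι ⊔ F ∙ (ι y + v)) = finrank F P + 1 := by
  have hιy : f (ι y) = 0 := hιf (mem_range_self ι y)
  have hy : ι y + v ∉ P.map ι := fun h => by simpa [hιy, hv] using hιf (map_le_range h)
  rw [finrank_sup_span_singleton hy, (equivMapOfInjective ι hι P).finrank_eq]

variable [Finite F] [FiniteDimensional F U]

noncomputable def cosetSubspaces (ι : U →ₗ[F] V) (v : V) (P : Submodule F U) :
    Finset (Submodule F V) := by
  classical
  let : Fintype (U ⧸ P) := @Fintype.ofFinite _ (Module.finite_of_finite F)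
  exact Finset.univ.image fun y : U ⧸ P => P.map ι ⊔ F ∙ (ι y.out + v)

theorem card_cosetSubspaces_le (P : Submodule F U) :
    (cosetSubspaces ι v P).card ≤ Nat.card F ^ (finrank F U - finrank F P) := by
  classical
  let : Fintype (U ⧸ P) := @Fintype.ofFinite _ (Module.finite_of_finite F)
  rw [← finrank_quotient, ← natCard_eq_pow_finrank, ← Fintype.card_eq_nat_card]
  exact Finset.card_image_le

theorem exists_eq_of_mem_cosetSubspaces {P : Submodule F U} {W : Submodule F V}
    (hW : W ∈ cosetSubspaces ι v P) : ∃ y : U, W = P.map ι ⊔ F ∙ (ι y + v) := by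
  classical
  let : Fintype (U ⧸ P) := @Fintype.ofFinite _ (Module.finite_of_finite F)
  obtain ⟨y, -, rfl⟩ := Finset.mem_image.mp hW
  exact ⟨_, rfl⟩

theorem exists_mem_cosetSubspaces (P : Submodule F U) {u : V} (hu : u - v ∈ range ι) :
    ∃ W ∈ cosetSubspaces ι v P, P.map ι ≤ W ∧ u ∈ W := by
  classical
  let : Fintype (U ⧸ P) := @Fintype.ofFinite _ (Module.finite_of_finite F)
  obtain ⟨β, hβ⟩ := hu
  set y := (Submodule.Quotient.mk β : U ⧸ P).out
  have hβy : β - y ∈ P := (Submodule.Quotient.eq P).mp (Quotient.out_eq' _).symm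
  refine ⟨P.map ι ⊔ F ∙ (ι y + v), Finset.mem_image.mpr ⟨_, Finset.mem_univ _, rfl⟩,
    le_sup_left, ?_⟩
  have : u = ι (β - y) + (ι y + v) := by rw [map_sub, hβ]; abel
  rw [this]
  exact add_mem (mem_sup_left (mem_map_of_mem hβy)) (mem_sup_right (mem_span_singleton_self _))

noncomputable def recursiveDesign (ι : U →ₗ[F] V) (v : V) (S₁ S₂ : Finset (Submodule F U)) :
    Finset (Submodule F V) := by
  classical
  exact S₁.biUnion (cosetSubspaces ι v) ∪ S₂.image (map ι)

theorem card_recursiveDesign_le {S₁ S₂ : Finset (Submodule F U)} {k : ℕ}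
    (hS₁ : ∀ P ∈ S₁, finrank F P = k) :
    (recursiveDesign ι v S₁ S₂).card ≤ Nat.card F ^ (finrank F U - k) * S₁.card + S₂.card := by
  classical
  calc (recursiveDesign ι v S₁ S₂).card
      ≤ (S₁.biUnion (cosetSubspaces ι v)).card + (S₂.image (map ι)).card :=
        Finset.card_union_le _ _
    _ ≤ ∑ P ∈ S₁, (cosetSubspaces ι v P).card + S₂.card :=
        add_le_add Finset.card_biUnion_le Finset.card_image_le
    _ ≤ ∑ _P ∈ S₁, Nat.card F ^ (finrank F U - k) + S₂.card := by
        gcongr with P hP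
        exact hS₁ P hP ▸ card_cosetSubspaces_le P
    _ = Nat.card F ^ (finrank F U - k) * S₁.card + S₂.card := by
        rw [Finset.sum_const, smul_eq_mul, mul_comm]

theorem isCoveringDesign_recursiveDesign [FiniteDimensional F V] (hι : Function.Injective ι)
    (hιf : range ι = ker f) (hv : f v = 1) {S₁ S₂ : Finset (Submodule F U)} {k r : ℕ}
    (hS₁ : IsCoveringDesign S₁ k r) (hS₂ : IsCoveringDesign S₂ (k + 1) (r + 1)) :
    IsCoveringDesign (recursiveDesign ι v S₁ S₂) (k + 1) (r + 1) := by
  classical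
  refine ⟨fun W hW => ?_, fun R hR => ?_⟩
  · rcases Finset.mem_union.mp hW with hW | hW
    · obtain ⟨P, hP, hW⟩ := Finset.mem_biUnion.mp hW
      obtain ⟨y, rfl⟩ := exists_eq_of_mem_cosetSubspaces hW
      rw [finrank_map_sup_span_singleton hι hιf.le hv, hS₁.1 P hP]
    · obtain ⟨W, hW', rfl⟩ := Finset.mem_image.mp hW
      rw [(equivMapOfInjective ι hι W).finrank_eq.symm, hS₂.1 W hW']
  by_cases hRf : R ≤ ker f
  · have hRι : range ι ⊓ R = R := inf_eq_right.mpr (hιf ▸ hRf)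
    obtain ⟨W, hW, hRW⟩ := hS₂.2 (R.comap ι) (by rw [finrank_comap_of_injective hι, hRι, hR])
    refine ⟨W.map ι, Finset.mem_union_right _ (Finset.mem_image_of_mem _ hW), ?_⟩
    calc R = (R.comap ι).map ι := by rw [map_comap_eq, hRι]
      _ ≤ W.map ι := map_mono hRW
  obtain ⟨u₀, hu₀R, hu₀⟩ := SetLike.not_le_iff_exists.mp hRf
  set u := (f u₀)⁻¹ • u₀
  have hu : u ∈ R := smul_mem _ _ hu₀R
  have hfu : f u = 1 := by simpa [u] using inv_mul_cancel₀ hu₀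
  have hR' : finrank F ↥(ker f ⊓ R) = r := by
    have := finrank_sup_span_singleton (p := ker f ⊓ R) (v := u) (fun h => by simp_all)
    rw [ker_inf_sup_span_singleton hu hfu, hR] at this
    omega
  obtain ⟨P, hP, hRP⟩ := hS₁.2 (R.comap ι) (by rwa [finrank_comap_of_injective hι, hιf])
  have huv : u - v ∈ range ι := by rw [hιf, mem_ker, map_sub, hfu, hv, sub_self]
  obtain ⟨W, hW, hPW, huW⟩ := exists_mem_cosetSubspaces P huv
  refine ⟨W, Finset.mem_union_left _ (Finset.mem_biUnion.mpr ⟨P, hP, hW⟩), ?_⟩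
  rw [← ker_inf_sup_span_singleton hu hfu]
  refine sup_le ?_ ((span_singleton_le_iff_mem _ _).mpr huW)
  calc ker f ⊓ R = (R.comap ι).map ι := by rw [map_comap_eq, hιf]
    _ ≤ P.map ι := map_mono hRP
    _ ≤ W := hPW

end Recursion

section FinCons

variable {F : Type*} [Field F] {p : ℕ}

theorem vecCons_zero_id_injective :
    Function.Injective (vecCons (0 : (Fin p → F) →ₗ[F] F) LinearMap.id) := fun x y h => by
  simpa using h

theorem range_vecCons_zero_id :
    range (vecCons (0 : (Fin p → F) →ₗ[F] F) LinearMap.id) = ker (proj 0) := by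
  ext x
  refine ⟨?_, fun hx => ⟨Fin.tail x, ?_⟩⟩
  · rintro ⟨y, rfl⟩
    simp
  · ext i
    cases i using Fin.cases <;> simp_all [Fin.tail]

end FinCons

theorem covNum_recursive_upper (F : Type) [Field F] [Fintype F] (n k r : ℕ)
    (hr1 : 1 ≤ r) (hrk : r ≤ k) (hkn : k < n) :
    covNum F n k r ≤
      (Fintype.card F) ^ (n - k) * covNum F (n - 1) (k - 1) (r - 1)
        + covNum F (n - 1) k r := by
  obtain ⟨p, rfl⟩ : ∃ p, n = p + 1 := ⟨n - 1, by omega⟩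
  obtain ⟨k, rfl⟩ : ∃ k', k = k' + 1 := ⟨k - 1, by omega⟩
  obtain ⟨r, rfl⟩ : ∃ r', r = r' + 1 := ⟨r - 1, by omega⟩
  obtain ⟨S₁, hS₁, hS₁card⟩ := exists_isCoveringDesign_card_eq_covNum (F := F) (n := p)
    (k := k) (r := r) (by omega) (by omega)
  obtain ⟨S₂, hS₂, hS₂card⟩ := exists_isCoveringDesign_card_eq_covNum (F := F) (n := p)
    (k := k + 1) (r := r + 1) (by omega) (by omega)
  calc covNum F (p + 1) (k + 1) (r + 1)
      ≤ (recursiveDesign (vecCons 0 LinearMap.id) (Pi.single 0 1) S₁ S₂).card :=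
        covNum_le_card (isCoveringDesign_recursiveDesign vecCons_zero_id_injective
          range_vecCons_zero_id (by simp) hS₁ hS₂)
    _ ≤ Nat.card F ^ (finrank F (Fin p → F) - k) * S₁.card + S₂.card :=
        card_recursiveDesign_le hS₁.1
    _ = _ := by simp [hS₁card, hS₂card]
end
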